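/- Let Φ be a Young function such that γ_Φ(p) := sup_{t ≥ 1} Φ(t)/t^{p'} < ∞ for some p > 1 (with p' the conjugate exponent). Then the Orlicz average is controlled by the L^{r}-average: ‖f‖_{Φ,Q} ≤ C(γ_Φ(r'))^{1/r} ⟨f⟩_{r,Q} for any r > 1 with γ_Φ(r') < ∞; consequently M_Φ f(x) ≤ C(γ_Φ(r'))^{1/r} M_r f(x) pointwise. -/

import Mathlib

/-!
Since `(r')' = r`, `γ = γ_Φ(r')` is the supremum of `Φ(t)/t^r` over `t ≥ 1`. By continuity at `0`
there is `s ∈ (0,1]` with `Φ(s) ≤ 1/2`; below `s` monotonicity gives `Φ ≤ 1/2`, above it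
`Φ(t) ≤ Φ(max(t,1)) ≤ γ (t/s)^r`. So `Φ(t) ≤ 1/2 + (γ/s^r) t^r` for all `t ≥ 0`, and integrating
this bound at `t = |f|/λ` over `Q` shows that every `λ > (2γ)^{1/r} s⁻¹ ⟨f⟩_{r,Q}` is admissible
in the Luxemburg norm.
-/

open MeasureTheory ENNReal

noncomputable section

/-- An axis-parallel cube in ℝⁿ, given by its center and half side length. -/
structure Cube (n : ℕ) where
  c : Fin n → ℝ
  r : ℝ
  r_pos : 0 < r

/-- The set of points of a cube. -/
def Cube.set {n : ℕ} (Q : Cube n) : Set (Fin n → ℝ) :=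
  {x | ∀ i, |x i - Q.c i| ≤ Q.r}

/-- A Young function: continuous, convex, increasing on `[0,∞)`, `Φ(0) = 0`,
`Φ(t) → ∞` as `t → ∞`. -/
structure YoungFunction where
  toFun : ℝ → ℝ
  zero : toFun 0 = 0
  mono : MonotoneOn toFun (Set.Ici 0)
  convex : ConvexOn ℝ (Set.Ici 0) toFun
  continuous : ContinuousOn toFun (Set.Ici 0)
  tendsto_atTop : Filter.Tendsto toFun Filter.atTop Filter.atTop

/-- The Luxemburg norm `‖f‖_{Φ,Q} = inf {λ > 0 : (1/|Q|) ∫_Q Φ(|f|/λ) ≤ 1}`. -/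
def luxemburgNorm (n : ℕ) (Φ : ℝ → ℝ) (f : (Fin n → ℝ) → ℝ) (Q : Cube n) : ℝ :=
  sInf {lam : ℝ | 0 < lam ∧
    (∫⁻ x in Q.set, ENNReal.ofReal (Φ (|f x| / lam))) ≤ volume Q.set}

/-- `γ_Φ(p) = sup_{t ≥ 1} Φ(t)/t^{p'}`, where `p' = p/(p-1)` is the conjugate
exponent of `p`. -/
def gammaPhi (Φ : ℝ → ℝ) (p : ℝ) : ℝ :=
  sSup ((fun t => Φ t / t ^ (p / (p - 1))) '' Set.Ici 1)

/-- The normalized `L^r` average `⟨f⟩_{r,Q}` of a real function on a cube. -/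
def avgR (n : ℕ) (r : ℝ) (f : (Fin n → ℝ) → ℝ) (Q : Cube n) : ℝ≥0∞ :=
  ((volume Q.set)⁻¹ * ∫⁻ x in Q.set, ENNReal.ofReal |f x| ^ r) ^ (1 / r)

/-- The Orlicz maximal operator `M_Φ f(x) = sup_{Q ∋ x} ‖f‖_{Φ,Q}`. -/
def orliczMax (n : ℕ) (Φ : ℝ → ℝ) (f : (Fin n → ℝ) → ℝ) (x : Fin n → ℝ) : ℝ≥0∞ :=
  ⨆ (Q : Cube n) (_ : x ∈ Q.set), ENNReal.ofReal (luxemburgNorm n Φ f Q)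

/-- The maximal operator `M_r f(x) = sup_{Q ∋ x} ⟨f⟩_{r,Q}`. -/
def maximalR (n : ℕ) (r : ℝ) (f : (Fin n → ℝ) → ℝ) (x : Fin n → ℝ) : ℝ≥0∞ :=
  ⨆ (Q : Cube n) (_ : x ∈ Q.set), avgR n r f Q

lemma Cube.set_eq_closedBall {n : ℕ} (Q : Cube n) : Q.set = Metric.closedBall Q.c Q.r := by
  rw [closedBall_pi _ Q.r_pos.le]
  ext x
  simp [Cube.set, Real.dist_eq]

lemma Cube.volume_pos {n : ℕ} (Q : Cube n) : 0 < volume Q.set := by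
  rw [Q.set_eq_closedBall]
  exact Metric.measure_closedBall_pos volume Q.c Q.r_pos

lemma Cube.volume_ne_top {n : ℕ} (Q : Cube n) : volume Q.set ≠ ⊤ := by
  rw [Q.set_eq_closedBall]
  exact measure_closedBall_lt_top.ne

lemma lintegral_rpow_eq_volume_mul_avgR_rpow {n : ℕ} {r : ℝ} (hr : r ≠ 0)
    (f : (Fin n → ℝ) → ℝ) (Q : Cube n) :
    ∫⁻ x in Q.set, ENNReal.ofReal |f x| ^ r = volume Q.set * avgR n r f Q ^ r := by
  rw [avgR, ← ENNReal.rpow_mul, one_div_mul_cancel hr, ENNReal.rpow_one, ← mul_assoc,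
    ENNReal.mul_inv_cancel Q.volume_pos.ne' Q.volume_ne_top, one_mul]

lemma luxemburgNorm_le {n : ℕ} {Φ : ℝ → ℝ} {f : (Fin n → ℝ) → ℝ} {Q : Cube n} {lam : ℝ}
    (hlam : 0 < lam)
    (h : ∫⁻ x in Q.set, ENNReal.ofReal (Φ (|f x| / lam)) ≤ volume Q.set) :
    luxemburgNorm n Φ f Q ≤ lam :=
  csInf_le ⟨0, fun _ hμ => hμ.1.le⟩ ⟨hlam, h⟩

lemma lintegral_ofReal_comp_div_le {α : Type*} [MeasurableSpace α] (μ : Measure α)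
    {Φ : ℝ → ℝ} {b c r lam : ℝ} (hc : 0 ≤ c) (hr : 0 ≤ r) (hlam : 0 < lam)
    (hΦ : ∀ t, 0 ≤ t → Φ t ≤ b + c * t ^ r) (f : α → ℝ) :
    ∫⁻ x, ENNReal.ofReal (Φ (|f x| / lam)) ∂μ
      ≤ ENNReal.ofReal b * μ Set.univ
        + ENNReal.ofReal (c / lam ^ r) * ∫⁻ x, ENNReal.ofReal |f x| ^ r ∂μ := by
  have hpt : ∀ x, ENNReal.ofReal (Φ (|f x| / lam))
      ≤ ENNReal.ofReal b + ENNReal.ofReal (c / lam ^ r) * ENNReal.ofReal |f x| ^ r := by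
    intro x
    have hscale : c * (|f x| / lam) ^ r = c / lam ^ r * |f x| ^ r := by
      rw [Real.div_rpow (abs_nonneg _) hlam.le]
      ring
    calc ENNReal.ofReal (Φ (|f x| / lam))
        ≤ ENNReal.ofReal (b + c * (|f x| / lam) ^ r) :=
          ENNReal.ofReal_le_ofReal (hΦ _ (by positivity))
      _ ≤ ENNReal.ofReal b + ENNReal.ofReal (c * (|f x| / lam) ^ r) := ENNReal.ofReal_add_le
      _ = ENNReal.ofReal b + ENNReal.ofReal (c / lam ^ r) * ENNReal.ofReal |f x| ^ r := by
        rw [hscale, ENNReal.ofReal_mul (by positivity),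
          ENNReal.ofReal_rpow_of_nonneg (abs_nonneg _) hr]
  calc ∫⁻ x, ENNReal.ofReal (Φ (|f x| / lam)) ∂μ
      ≤ ∫⁻ x, (ENNReal.ofReal b + ENNReal.ofReal (c / lam ^ r) * ENNReal.ofReal |f x| ^ r) ∂μ :=
        lintegral_mono hpt
    _ = _ := by
      rw [lintegral_add_left measurable_const, lintegral_const,
        lintegral_const_mul' _ _ ENNReal.ofReal_ne_top]

lemma luxemburgNorm_le_of_mul_avgR_le {n : ℕ} {Φ : ℝ → ℝ} {r c K a lam : ℝ} (hr : 0 < r)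
    (hc : 0 ≤ c) (hK : 0 ≤ K) (hcK : 2 * c ≤ K ^ r)
    (hΦ : ∀ t, 0 ≤ t → Φ t ≤ 1 / 2 + c * t ^ r) {f : (Fin n → ℝ) → ℝ} {Q : Cube n}
    (ha : 0 ≤ a) (hA : avgR n r f Q = ENNReal.ofReal a) (hlam : 0 < lam) (hKa : K * a ≤ lam) :
    luxemburgNorm n Φ f Q ≤ lam := by
  have hsmall : c / lam ^ r * a ^ r ≤ 1 / 2 := by
    have : 2 * c * a ^ r ≤ lam ^ r :=
      calc 2 * c * a ^ r ≤ K ^ r * a ^ r := by gcongr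
        _ = (K * a) ^ r := (Real.mul_rpow hK ha).symm
        _ ≤ lam ^ r := by gcongr
    rw [div_mul_eq_mul_div, div_le_iff₀ (by positivity)]
    linarith
  apply luxemburgNorm_le hlam
  calc ∫⁻ x in Q.set, ENNReal.ofReal (Φ (|f x| / lam))
      ≤ ENNReal.ofReal (1 / 2) * volume Q.set
        + ENNReal.ofReal (c / lam ^ r) * (volume Q.set * avgR n r f Q ^ r) := by
        rw [← lintegral_rpow_eq_volume_mul_avgR_rpow hr.ne' f Q,
          ← Measure.restrict_apply_univ Q.set]
        exact lintegral_ofReal_comp_div_le _ hc hr.le hlam hΦ f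
    _ = (ENNReal.ofReal (1 / 2) + ENNReal.ofReal (c / lam ^ r * a ^ r)) * volume Q.set := by
        rw [hA, ENNReal.ofReal_rpow_of_nonneg ha hr.le, ENNReal.ofReal_mul (by positivity)]
        ring
    _ ≤ (ENNReal.ofReal (1 / 2) + ENNReal.ofReal (1 / 2)) * volume Q.set := by gcongr
    _ = volume Q.set := by
        rw [← ENNReal.ofReal_add (by norm_num) (by norm_num)]
        norm_num

lemma ofReal_luxemburgNorm_le_mul_avgR {n : ℕ} {Φ : ℝ → ℝ} {r c K : ℝ} (hr : 0 < r)
    (hc : 0 ≤ c) (hK : 0 < K) (hcK : 2 * c ≤ K ^ r)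
    (hΦ : ∀ t, 0 ≤ t → Φ t ≤ 1 / 2 + c * t ^ r) (f : (Fin n → ℝ) → ℝ) (Q : Cube n) :
    ENNReal.ofReal (luxemburgNorm n Φ f Q) ≤ ENNReal.ofReal K * avgR n r f Q := by
  rcases eq_or_ne (avgR n r f Q) ⊤ with hA | hA
  · simp [hA, ENNReal.mul_top, hK]
  set a := (avgR n r f Q).toReal
  have ha : 0 ≤ a := ENNReal.toReal_nonneg
  rw [← ENNReal.ofReal_toReal hA, ← ENNReal.ofReal_mul hK.le]
  refine ENNReal.ofReal_le_ofReal (le_of_forall_pos_le_add fun ε hε => ?_)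
  exact luxemburgNorm_le_of_mul_avgR_le hr hc hK.le hcK hΦ ha (ENNReal.ofReal_toReal hA).symm
    (by positivity) (le_add_of_nonneg_right hε.le)

lemma orliczMax_le_mul_maximalR {n : ℕ} {Φ : ℝ → ℝ} {r : ℝ} {K : ℝ≥0∞}
    {f : (Fin n → ℝ) → ℝ} (h : ∀ Q, ENNReal.ofReal (luxemburgNorm n Φ f Q) ≤ K * avgR n r f Q)
    (x : Fin n → ℝ) : orliczMax n Φ f x ≤ K * maximalR n r f x :=
  iSup₂_le fun Q hQ => (h Q).trans (by gcongr; exact le_iSup₂ (f := fun Q _ => avgR n r f Q) Q hQ)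

lemma le_sSup_div_rpow_mul {φ : ℝ → ℝ} {r t : ℝ}
    (hbdd : BddAbove ((fun t => φ t / t ^ r) '' Set.Ici 1)) (ht : 1 ≤ t) :
    φ t ≤ sSup ((fun t => φ t / t ^ r) '' Set.Ici 1) * t ^ r := by
  rw [← div_le_iff₀ (by positivity)]
  exact le_csSup hbdd ⟨t, ht, rfl⟩

namespace YoungFunction

variable (Φ : YoungFunction)

lemma exists_mem_Ioc_le {ε : ℝ} (hε : 0 < ε) : ∃ s ∈ Set.Ioc (0 : ℝ) 1, Φ.toFun s ≤ ε := by
  have hcont : Filter.Tendsto Φ.toFun (nhdsWithin 0 (Set.Ioi 0)) (nhds 0) := by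
    have := (Φ.continuous 0 Set.self_mem_Ici).tendsto
    rw [Φ.zero] at this
    exact this.mono_left (nhdsWithin_mono 0 Set.Ioi_subset_Ici_self)
  obtain ⟨s, hsΦ, hs⟩ := ((hcont.eventually (ge_mem_nhds hε)).and
    (Ioc_mem_nhdsGT zero_lt_one)).exists
  exact ⟨s, hs, hsΦ⟩

lemma sSup_div_rpow_pos {r : ℝ} (hbdd : BddAbove ((fun t => Φ.toFun t / t ^ r) '' Set.Ici 1)) :
    0 < sSup ((fun t => Φ.toFun t / t ^ r) '' Set.Ici 1) := by
  obtain ⟨t, hΦt, ht⟩ := ((Φ.tendsto_atTop.eventually_ge_atTop 1).and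
    (Filter.eventually_ge_atTop 1)).exists
  exact pos_of_mul_pos_left (zero_lt_one.trans_le (hΦt.trans (le_sSup_div_rpow_mul hbdd ht)))
    (Real.rpow_nonneg (zero_le_one.trans ht) r)

lemma le_half_add_mul_rpow {r s : ℝ} (hr : 0 ≤ r)
    (hbdd : BddAbove ((fun t => Φ.toFun t / t ^ r) '' Set.Ici 1))
    (hs : s ∈ Set.Ioc (0 : ℝ) 1) (hsΦ : Φ.toFun s ≤ 1 / 2) {t : ℝ} (ht : 0 ≤ t) :
    Φ.toFun t ≤ 1 / 2 + sSup ((fun t => Φ.toFun t / t ^ r) '' Set.Ici 1) / s ^ r * t ^ r := by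
  set γ := sSup ((fun t => Φ.toFun t / t ^ r) '' Set.Ici 1)
  have hγ : 0 ≤ γ := (Φ.sSup_div_rpow_pos hbdd).le
  obtain ⟨hs0, hs1⟩ := hs
  rcases le_or_gt t s with hts | hst
  · have := Φ.mono ht hs0.le hts
    have : 0 ≤ γ / s ^ r * t ^ r := by positivity
    linarith
  · have hmax : max t 1 ≤ t / s := max_le ((le_div_iff₀ hs0).2 (by nlinarith))
      ((le_div_iff₀ hs0).2 (by linarith))
    calc Φ.toFun t ≤ Φ.toFun (max t 1) :=
          Φ.mono ht (ht.trans (le_max_left t 1)) (le_max_left t 1)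
      _ ≤ γ * max t 1 ^ r := le_sSup_div_rpow_mul hbdd (le_max_right t 1)
      _ ≤ γ * (t / s) ^ r := by gcongr
      _ = γ / s ^ r * t ^ r := by rw [Real.div_rpow ht hs0.le]; ring
      _ ≤ 1 / 2 + γ / s ^ r * t ^ r := by linarith

end YoungFunction

/-- if `γ_Φ(r') < ∞` for some `r > 1`, then
`‖f‖_{Φ,Q} ≤ C (γ_Φ(r'))^{1/r} ⟨f⟩_{r,Q}` and consequently
`M_Φ f(x) ≤ C (γ_Φ(r'))^{1/r} M_r f(x)` pointwise. -/
theorem luxemburgNorm_le_avg_and_orliczMax_le_maximal (n : ℕ) (Φ : YoungFunction)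
    (r : ℝ) (hr : 1 < r)
    (hγ : BddAbove ((fun t => Φ.toFun t / t ^ ((r / (r - 1)) / (r / (r - 1) - 1))) ''
      Set.Ici 1)) :
    ∃ C : ℝ, 0 < C ∧
      (∀ (f : (Fin n → ℝ) → ℝ), Measurable f → ∀ Q : Cube n,
        ENNReal.ofReal (luxemburgNorm n Φ.toFun f Q)
          ≤ ENNReal.ofReal (C * gammaPhi Φ.toFun (r / (r - 1)) ^ (1 / r)) * avgR n r f Q) ∧
      (∀ (f : (Fin n → ℝ) → ℝ), Measurable f → ∀ x : Fin n → ℝ,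
        orliczMax n Φ.toFun f x
          ≤ ENNReal.ofReal (C * gammaPhi Φ.toFun (r / (r - 1)) ^ (1 / r)) *
            maximalR n r f x) := by
  have hr0 : 0 < r := by linarith
  have hconj : (r / (r - 1)) / (r / (r - 1) - 1) = r :=
    (Real.HolderConjugate.conjExponent hr).symm.conjExponent_eq
  rw [hconj] at hγ
  have hgamma : gammaPhi Φ.toFun (r / (r - 1))
      = sSup ((fun t => Φ.toFun t / t ^ r) '' Set.Ici 1) := by
    rw [gammaPhi, hconj]
  set γ := sSup ((fun t => Φ.toFun t / t ^ r) '' Set.Ici 1)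
  have hγ0 : 0 < γ := Φ.sSup_div_rpow_pos hγ
  obtain ⟨s, hs, hsΦ⟩ := Φ.exists_mem_Ioc_le (by norm_num : (0 : ℝ) < 1 / 2)
  have hs0 : 0 < s := hs.1
  set C := (2 / s ^ r) ^ (1 / r)
  have hCγ : (C * γ ^ (1 / r)) ^ r = 2 * (γ / s ^ r) := by
    rw [← Real.mul_rpow (by positivity) hγ0.le, one_div,
      Real.rpow_inv_rpow (by positivity) hr0.ne']
    ring
  have hlux : ∀ f Q, ENNReal.ofReal (luxemburgNorm n Φ.toFun f Q)
      ≤ ENNReal.ofReal (C * γ ^ (1 / r)) * avgR n r f Q :=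
    ofReal_luxemburgNorm_le_mul_avgR hr0 (by positivity) (by positivity) hCγ.ge
      fun t ht => Φ.le_half_add_mul_rpow hr0.le hγ hs hsΦ ht
  exact ⟨C, by positivity, fun f _ => hgamma ▸ hlux f,
    fun f _ => hgamma ▸ orliczMax_le_mul_maximalR (hlux f)⟩
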